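/- Let n₁, n₂ ≥ 2 be coprime integers. There exists φ₀ > 0 such that for every irrational φ with 0 < φ < φ₀ the following holds for the planar Lissajous curve L(t) = (cos(2π n₁ t), cos(2π n₂ (t + φ))): the set of unordered pairs {s, t} with s, t ∈ [0,1), s ≠ t and L(s) = L(t) is exactly the union of (type I) the pairs { −φ + (l/n₂ − k/n₁)/2 , −φ + (l/n₂ + k/n₁)/2 } over integers k ≥ 1, l ≥ 1 with n₂k < n₁l and n₂k + n₁l < 2n₁n₂, and (type II) the pairs { (k/n₁ − l/n₂)/2 , (k/n₁ + l/n₂)/2 } over integers k ≥ 1, l ≥ 1 with n₁l < n₂k and n₂k + n₁l < 2n₁n₂; moreover distinct index pairs (k, l) give distinct unordered pairs. -/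

import Mathlib

/-!
Since `cos (2πnx) = cos (2πny)` iff `n (y - x)` or `n (y + x)` is an integer, a double point
`s < t` falls into one of four cases. If both differences `n₁ (t - s)`, `n₂ (t - s)` are integers,
coprimality makes `t - s ∈ (0, 1)` an integer; if both sums `n₁ (t + s)`, `n₂ (t + s + 2φ)` are,
then `2φ` is rational. The mixed cases are types I and II: `s` and `t` are then rational
combinations of the two integers `(k, l)`, and `0 ≤ s < t < 1` translates into the lattice
inequalities. For type I the shift `0 < 2 n₁ n₂ φ < 1` turns non-strict integer inequalities into
strict real ones; the remaining boundary lattice points are excluded by coprimality.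
Since `s < t`, an unordered pair determines `(s, t)` and hence `(k, l)`; a type I and a type II
pair cannot coincide because `s + t` would again make `2φ` rational.
-/

open Real

theorem Sym2.mk_eq_mk_iff_of_lt {α : Type*} [LinearOrder α] {x y x' y' : α} (h : x < y)
    (h' : x' < y') : s(x, y) = s(x', y') ↔ x = x' ∧ y = y' := by
  rw [Sym2.eq_iff, or_iff_left_iff_imp]
  rintro ⟨rfl, rfl⟩
  exact absurd (h.trans h') (lt_irrefl _)

theorem Nat.Coprime.exists_int_eq {m n : ℕ} (h : m.Coprime n) {x : ℝ} {a b : ℤ}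
    (ha : m * x = a) (hb : n * x = b) : ∃ c : ℤ, x = c := by
  obtain ⟨u, v, huv⟩ := Nat.isCoprime_iff_coprime.2 h
  have huv' : (u * m + v * n : ℝ) = 1 := by exact_mod_cast huv
  exact ⟨u * a + v * b, by push_cast; linear_combination -huv' * x + u * ha + v * hb⟩

theorem Irrational.two_mul_ne_div_sub_div {φ : ℝ} (hφ : Irrational φ) (k l : ℤ) (m n : ℕ) :
    2 * φ ≠ l / n - k / m := fun h =>
  hφ.ne_rat ((l / n - k / m) / 2) (by push_cast; linarith)

theorem Real.cos_two_pi_mul_eq_cos_two_pi_mul_iff (c x y : ℝ) :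
    cos (2 * π * c * x) = cos (2 * π * c * y) ↔
      (∃ m : ℤ, c * (y - x) = m) ∨ ∃ m : ℤ, c * (y + x) = m := by
  have hπ : 2 * π ≠ 0 := by positivity
  rw [Real.cos_eq_cos_iff, ← exists_or]
  refine exists_congr fun m => or_congr ?_ ?_ <;>
    constructor <;> intro h
  · exact mul_left_cancel₀ hπ (by linear_combination h)
  · linear_combination 2 * π * h
  · exact mul_left_cancel₀ hπ (by linear_combination h)
  · linear_combination 2 * π * h

noncomputable section

namespace Lissajous

variable (n₁ n₂ : ℕ) (φ : ℝ)

def curve (t : ℝ) : ℝ × ℝ :=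
  (cos (2 * π * n₁ * t), cos (2 * π * n₂ * (t + φ)))

def doublePoints : Set (Sym2 ℝ) :=
  {z | ∃ s t : ℝ, z = s(s, t) ∧ s ∈ Set.Ico (0:ℝ) 1 ∧ t ∈ Set.Ico (0:ℝ) 1 ∧ s ≠ t ∧
    curve n₁ n₂ φ s = curve n₁ n₂ φ t}

def typeIIndices : Set (ℤ × ℤ) :=
  {p | 1 ≤ p.1 ∧ 1 ≤ p.2 ∧ (n₂ : ℤ) * p.1 < (n₁ : ℤ) * p.2 ∧
    (n₂ : ℤ) * p.1 + (n₁ : ℤ) * p.2 < 2 * n₁ * n₂}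

def typeIIIndices : Set (ℤ × ℤ) :=
  {p | 1 ≤ p.1 ∧ 1 ≤ p.2 ∧ (n₁ : ℤ) * p.2 < (n₂ : ℤ) * p.1 ∧
    (n₂ : ℤ) * p.1 + (n₁ : ℤ) * p.2 < 2 * n₁ * n₂}

def typeIPair (p : ℤ × ℤ) : Sym2 ℝ :=
  s(-φ + ((p.2 : ℝ) / n₂ - (p.1 : ℝ) / n₁) / 2, -φ + ((p.2 : ℝ) / n₂ + (p.1 : ℝ) / n₁) / 2)

def typeIIPair (p : ℤ × ℤ) : Sym2 ℝ :=
  s(((p.1 : ℝ) / n₁ - (p.2 : ℝ) / n₂) / 2, ((p.1 : ℝ) / n₁ + (p.2 : ℝ) / n₂) / 2)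

variable {n₁ n₂ φ}

theorem curve_eq_curve_iff {s t : ℝ} :
    curve n₁ n₂ φ s = curve n₁ n₂ φ t ↔
      ((∃ a : ℤ, n₁ * (t - s) = a) ∨ ∃ k : ℤ, n₁ * (t + s) = k) ∧
      ((∃ l : ℤ, n₂ * (t - s) = l) ∨ ∃ l : ℤ, n₂ * (t + s + 2 * φ) = l) := by
  rw [curve, curve, Prod.mk.injEq, cos_two_pi_mul_eq_cos_two_pi_mul_iff,
    cos_two_pi_mul_eq_cos_two_pi_mul_iff, add_sub_add_right_eq_sub,
    show t + φ + (s + φ) = t + s + 2 * φ by ring]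

theorem mem_doublePoints_iff {z : Sym2 ℝ} :
    z ∈ doublePoints n₁ n₂ φ ↔
      ∃ s t : ℝ, z = s(s, t) ∧ 0 ≤ s ∧ s < t ∧ t < 1 ∧ curve n₁ n₂ φ s = curve n₁ n₂ φ t := by
  constructor
  · rintro ⟨s, t, rfl, ⟨hs₀, hs₁⟩, ⟨ht₀, ht₁⟩, hst, hL⟩
    rcases hst.lt_or_gt with hst | hts
    · exact ⟨s, t, rfl, hs₀, hst, ht₁, hL⟩
    · exact ⟨t, s, Sym2.eq_swap, ht₀, hts, hs₁, hL.symm⟩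
  · rintro ⟨s, t, rfl, hs₀, hst, ht₁, hL⟩
    exact ⟨s, t, rfl, ⟨hs₀, hst.trans ht₁⟩, ⟨hs₀.trans hst.le, ht₁⟩, hst.ne, hL⟩

theorem mem_typeIIndices_iff (hcop : n₁.Coprime n₂) (hn₁ : 0 < n₁) (hn₂ : 0 < n₂)
    (hφ₀ : 0 < φ) (hφ : φ < 1 / (2 * n₁ * n₂)) {s t : ℝ} {a l : ℤ}
    (hs : 2 * n₁ * n₂ * (s + φ) = n₁ * l - n₂ * a)
    (ht : 2 * n₁ * n₂ * (t + φ) = n₁ * l + n₂ * a) :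
    (a, l) ∈ typeIIndices n₁ n₂ ↔ 0 ≤ s ∧ s < t ∧ t < 1 := by
  have hN : (0 : ℝ) < 2 * n₁ * n₂ := by positivity
  have hε : 2 * n₁ * n₂ * φ < 1 := by rwa [lt_div_iff₀ hN, mul_comm] at hφ
  have hε₀ : 0 < 2 * n₁ * n₂ * φ := by positivity
  simp only [typeIIndices, Set.mem_ofPred_eq]
  constructor
  · rintro ⟨ha, -, hlt, hsum⟩
    have ha' : (1 : ℝ) ≤ a := by exact_mod_cast ha
    have hlt' : (n₂ * a + 1 : ℝ) ≤ n₁ * l := by exact_mod_cast hlt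
    have hsum' : (n₂ * a + n₁ * l + 1 : ℝ) ≤ 2 * n₁ * n₂ := by exact_mod_cast hsum
    have ha₀ : (0 : ℝ) < n₂ * a := mul_pos (Nat.cast_pos.2 hn₂) (by linarith)
    refine ⟨?_, ?_, ?_⟩ <;> nlinarith
  · rintro ⟨hs₀, hst, ht₁⟩
    have ha : (0 : ℤ) < a := by
      have : (0 : ℝ) < n₂ * a := by nlinarith
      exact_mod_cast pos_of_mul_pos_right this (Nat.cast_nonneg n₂)
    have hlt : (n₂ : ℤ) * a < n₁ * l := by
      have : (n₂ * a : ℝ) < n₁ * l := by nlinarith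
      exact_mod_cast this
    have hle : (n₂ : ℤ) * a + n₁ * l ≤ 2 * n₁ * n₂ := by
      have : (n₂ * a + n₁ * l : ℝ) < 2 * n₁ * n₂ + 1 := by nlinarith
      have : (n₂ : ℤ) * a + n₁ * l < 2 * n₁ * n₂ + 1 := by exact_mod_cast this
      omega
    have hl : (0 : ℤ) < l := by
      have : (0 : ℤ) < n₁ * l := by nlinarith
      exact pos_of_mul_pos_right this (Int.natCast_nonneg n₁)
    refine ⟨ha, hl, hlt, hle.lt_of_ne fun heq => ?_⟩
    -- on the boundary `n₁ ∣ n₂ a`, so `n₁ ≤ a` by coprimality, which forces `n₁ l ≤ n₂ a`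
    have hdvd : (n₁ : ℤ) ∣ n₂ * a := ⟨2 * n₂ - l, by linear_combination heq⟩
    have := Int.le_of_dvd ha ((Nat.isCoprime_iff_coprime.2 hcop).dvd_of_dvd_mul_left hdvd)
    nlinarith

theorem mem_typeIIIndices_iff (hcop : n₁.Coprime n₂) (hn₁ : 0 < n₁) (hn₂ : 0 < n₂)
    {s t : ℝ} {k l : ℤ}
    (hs : 2 * n₁ * n₂ * s = n₂ * k - n₁ * l) (ht : 2 * n₁ * n₂ * t = n₂ * k + n₁ * l) :
    (k, l) ∈ typeIIIndices n₁ n₂ ↔ 0 ≤ s ∧ s < t ∧ t < 1 := by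
  have hN : (0 : ℝ) < 2 * n₁ * n₂ := by positivity
  simp only [typeIIIndices, Set.mem_ofPred_eq]
  constructor
  · rintro ⟨-, hl, hlt, hsum⟩
    have hl' : (1 : ℝ) ≤ l := by exact_mod_cast hl
    have hlt' : (n₁ * l : ℝ) < n₂ * k := by exact_mod_cast hlt
    have hsum' : (n₂ * k + n₁ * l : ℝ) < 2 * n₁ * n₂ := by exact_mod_cast hsum
    have hl₀ : (0 : ℝ) < n₁ * l := mul_pos (Nat.cast_pos.2 hn₁) (by linarith)
    refine ⟨?_, ?_, ?_⟩ <;> nlinarith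
  · rintro ⟨hs₀, hst, ht₁⟩
    have hl : (0 : ℤ) < l := by
      have : (0 : ℝ) < n₁ * l := by nlinarith
      exact_mod_cast pos_of_mul_pos_right this (Nat.cast_nonneg n₁)
    have hle : (n₁ : ℤ) * l ≤ n₂ * k := by
      have : (n₁ * l : ℝ) ≤ n₂ * k := by nlinarith
      exact_mod_cast this
    have hsum : (n₂ : ℤ) * k + n₁ * l < 2 * n₁ * n₂ := by
      have : (n₂ * k + n₁ * l : ℝ) < 2 * n₁ * n₂ := by nlinarith
      exact_mod_cast this
    have hk : (0 : ℤ) < k := by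
      have : (0 : ℤ) < n₂ * k := by nlinarith
      exact pos_of_mul_pos_right this (Int.natCast_nonneg n₂)
    refine ⟨hk, hl, hle.lt_of_ne fun heq => ?_, hsum⟩
    -- on the boundary `n₁ ∣ n₂ k`, so `n₁ ≤ k` by coprimality, which forces `t ≥ 1`
    have hdvd : (n₁ : ℤ) ∣ n₂ * k := ⟨l, heq.symm⟩
    have := Int.le_of_dvd hk ((Nat.isCoprime_iff_coprime.2 hcop).dvd_of_dvd_mul_left hdvd)
    nlinarith

theorem typeIPair_eq (hn₁ : 0 < n₁) (hn₂ : 0 < n₂) {s t : ℝ} {a l : ℤ}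
    (hs : 2 * n₁ * n₂ * (s + φ) = n₁ * l - n₂ * a)
    (ht : 2 * n₁ * n₂ * (t + φ) = n₁ * l + n₂ * a) :
    typeIPair n₁ n₂ φ (a, l) = s(s, t) := by
  have : (n₁ : ℝ) ≠ 0 := by positivity
  have : (n₂ : ℝ) ≠ 0 := by positivity
  rw [typeIPair]
  congr 1 <;> field_simp <;> linarith

theorem typeIIPair_eq (hn₁ : 0 < n₁) (hn₂ : 0 < n₂) {s t : ℝ} {k l : ℤ}
    (hs : 2 * n₁ * n₂ * s = n₂ * k - n₁ * l) (ht : 2 * n₁ * n₂ * t = n₂ * k + n₁ * l) :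
    typeIIPair n₁ n₂ (k, l) = s(s, t) := by
  have : (n₁ : ℝ) ≠ 0 := by positivity
  have : (n₂ : ℝ) ≠ 0 := by positivity
  rw [typeIIPair]
  congr 1 <;> field_simp <;> linarith

theorem typeIPair_mem_doublePoints (hcop : n₁.Coprime n₂) (hn₁ : 0 < n₁) (hn₂ : 0 < n₂)
    (hφ₀ : 0 < φ) (hφ : φ < 1 / (2 * n₁ * n₂)) {p : ℤ × ℤ} (hp : p ∈ typeIIndices n₁ n₂) :
    typeIPair n₁ n₂ φ p ∈ doublePoints n₁ n₂ φ := by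
  obtain ⟨a, l⟩ := p
  have : (n₁ : ℝ) ≠ 0 := by positivity
  have : (n₂ : ℝ) ≠ 0 := by positivity
  set s := -φ + ((l : ℝ) / n₂ - (a : ℝ) / n₁) / 2 with hs_def
  set t := -φ + ((l : ℝ) / n₂ + (a : ℝ) / n₁) / 2 with ht_def
  have hs : 2 * n₁ * n₂ * (s + φ) = n₁ * l - n₂ * a := by rw [hs_def]; field_simp; ring
  have ht : 2 * n₁ * n₂ * (t + φ) = n₁ * l + n₂ * a := by rw [ht_def]; field_simp; ring
  obtain ⟨hs₀, hst, ht₁⟩ := (mem_typeIIndices_iff hcop hn₁ hn₂ hφ₀ hφ hs ht).1 hp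
  refine mem_doublePoints_iff.2 ⟨s, t, rfl, hs₀, hst, ht₁,
    curve_eq_curve_iff.2 ⟨.inl ⟨a, ?_⟩, .inr ⟨l, ?_⟩⟩⟩
    <;> rw [hs_def, ht_def] <;> field_simp <;> ring

theorem typeIIPair_mem_doublePoints (hcop : n₁.Coprime n₂) (hn₁ : 0 < n₁) (hn₂ : 0 < n₂)
    {p : ℤ × ℤ} (hp : p ∈ typeIIIndices n₁ n₂) :
    typeIIPair n₁ n₂ p ∈ doublePoints n₁ n₂ φ := by
  obtain ⟨k, l⟩ := p
  have : (n₁ : ℝ) ≠ 0 := by positivity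
  have : (n₂ : ℝ) ≠ 0 := by positivity
  set s := ((k : ℝ) / n₁ - (l : ℝ) / n₂) / 2 with hs_def
  set t := ((k : ℝ) / n₁ + (l : ℝ) / n₂) / 2 with ht_def
  have hs : 2 * n₁ * n₂ * s = n₂ * k - n₁ * l := by rw [hs_def]; field_simp
  have ht : 2 * n₁ * n₂ * t = n₂ * k + n₁ * l := by rw [ht_def]; field_simp
  obtain ⟨hs₀, hst, ht₁⟩ := (mem_typeIIIndices_iff hcop hn₁ hn₂ hs ht).1 hp
  refine mem_doublePoints_iff.2 ⟨s, t, rfl, hs₀, hst, ht₁,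
    curve_eq_curve_iff.2 ⟨.inr ⟨k, ?_⟩, .inl ⟨l, ?_⟩⟩⟩
    <;> rw [hs_def, ht_def] <;> field_simp <;> ring

theorem doublePoints_subset (hcop : n₁.Coprime n₂) (hn₁ : 0 < n₁) (hn₂ : 0 < n₂)
    (hφirr : Irrational φ) (hφ₀ : 0 < φ) (hφ : φ < 1 / (2 * n₁ * n₂)) :
    doublePoints n₁ n₂ φ ⊆
      typeIPair n₁ n₂ φ '' typeIIndices n₁ n₂ ∪ typeIIPair n₁ n₂ '' typeIIIndices n₁ n₂ := by
  intro z hz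
  obtain ⟨s, t, rfl, hs₀, hst, ht₁, hL⟩ := mem_doublePoints_iff.1 hz
  obtain ⟨⟨a, ha⟩ | ⟨k, hk⟩, ⟨l, hl⟩ | ⟨l, hl⟩⟩ := curve_eq_curve_iff.1 hL
  · obtain ⟨c, hc⟩ := hcop.exists_int_eq ha hl
    have hc₀ : (0 : ℤ) < c := by exact_mod_cast hc ▸ sub_pos.2 hst
    have hc₁ : c < 1 := by exact_mod_cast hc ▸ (by linarith : t - s < 1)
    omega
  · have hs : 2 * n₁ * n₂ * (s + φ) = n₁ * l - n₂ * a := by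
      linear_combination n₁ * hl - n₂ * ha
    have ht : 2 * n₁ * n₂ * (t + φ) = n₁ * l + n₂ * a := by
      linear_combination n₁ * hl + n₂ * ha
    exact .inl ⟨(a, l), (mem_typeIIndices_iff hcop hn₁ hn₂ hφ₀ hφ hs ht).2 ⟨hs₀, hst, ht₁⟩,
      typeIPair_eq hn₁ hn₂ hs ht⟩
  · have hs : 2 * n₁ * n₂ * s = n₂ * k - n₁ * l := by
      linear_combination n₂ * hk - n₁ * hl
    have ht : 2 * n₁ * n₂ * t = n₂ * k + n₁ * l := by
      linear_combination n₂ * hk + n₁ * hl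
    exact .inr ⟨(k, l), (mem_typeIIIndices_iff hcop hn₁ hn₂ hs ht).2 ⟨hs₀, hst, ht₁⟩,
      typeIIPair_eq hn₁ hn₂ hs ht⟩
  · refine absurd ?_ (hφirr.two_mul_ne_div_sub_div k l n₁ n₂)
    field_simp
    linear_combination n₁ * hl - n₂ * hk

theorem doublePoints_eq (hcop : n₁.Coprime n₂) (hn₁ : 0 < n₁) (hn₂ : 0 < n₂)
    (hφirr : Irrational φ) (hφ₀ : 0 < φ) (hφ : φ < 1 / (2 * n₁ * n₂)) :
    doublePoints n₁ n₂ φ =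
      typeIPair n₁ n₂ φ '' typeIIndices n₁ n₂ ∪ typeIIPair n₁ n₂ '' typeIIIndices n₁ n₂ := by
  refine (doublePoints_subset hcop hn₁ hn₂ hφirr hφ₀ hφ).antisymm (Set.union_subset ?_ ?_)
  · rintro _ ⟨p, hp, rfl⟩
    exact typeIPair_mem_doublePoints hcop hn₁ hn₂ hφ₀ hφ hp
  · rintro _ ⟨p, hp, rfl⟩
    exact typeIIPair_mem_doublePoints hcop hn₁ hn₂ hp

theorem injOn_typeIPair (hn₁ : 0 < n₁) (hn₂ : 0 < n₂) :
    Set.InjOn (typeIPair n₁ n₂ φ) (typeIIndices n₁ n₂) := by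
  rintro ⟨a, l⟩ ⟨ha, -⟩ ⟨a', l'⟩ ⟨ha', -⟩ h
  have hd : (0 : ℝ) < a / n₁ := div_pos (by exact_mod_cast ha) (by exact_mod_cast hn₁)
  have hd' : (0 : ℝ) < a' / n₁ := div_pos (by exact_mod_cast ha') (by exact_mod_cast hn₁)
  obtain ⟨h₁, h₂⟩ := (Sym2.mk_eq_mk_iff_of_lt (by linarith) (by linarith)).1 h
  have ha : (a : ℝ) / n₁ = a' / n₁ := by linarith
  have hl : (l : ℝ) / n₂ = l' / n₂ := by linarith
  rw [div_left_inj' (by positivity), Int.cast_inj] at ha hl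
  rw [ha, hl]

theorem injOn_typeIIPair (hn₁ : 0 < n₁) (hn₂ : 0 < n₂) :
    Set.InjOn (typeIIPair n₁ n₂) (typeIIIndices n₁ n₂) := by
  rintro ⟨k, l⟩ ⟨-, hl, -⟩ ⟨k', l'⟩ ⟨-, hl', -⟩ h
  have hd : (0 : ℝ) < l / n₂ := div_pos (by exact_mod_cast hl) (by exact_mod_cast hn₂)
  have hd' : (0 : ℝ) < l' / n₂ := div_pos (by exact_mod_cast hl') (by exact_mod_cast hn₂)
  obtain ⟨h₁, h₂⟩ := (Sym2.mk_eq_mk_iff_of_lt (by linarith) (by linarith)).1 h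
  have hk : (k : ℝ) / n₁ = k' / n₁ := by linarith
  have hl : (l : ℝ) / n₂ = l' / n₂ := by linarith
  rw [div_left_inj' (by positivity), Int.cast_inj] at hk hl
  rw [hk, hl]

theorem typeIPair_ne_typeIIPair (hφirr : Irrational φ) (p q : ℤ × ℤ) :
    typeIPair n₁ n₂ φ p ≠ typeIIPair n₁ n₂ q := by
  intro h
  apply hφirr.two_mul_ne_div_sub_div q.1 p.2 n₁ n₂
  rcases Sym2.eq_iff.1 h with ⟨h₁, h₂⟩ | ⟨h₁, h₂⟩ <;> linarith

end Lissajous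

end

open Lissajous

open Real in
/-- For coprime integers `n₁, n₂ ≥ 2` there is `φ₀ > 0` such that for every
irrational `0 < φ < φ₀`, the double points of the planar Lissajous curve
`L(t) = (cos(2πn₁t), cos(2πn₂(t+φ)))` on `[0,1)` are exactly the type I pairs
`{−φ + (l/n₂ − k/n₁)/2, −φ + (l/n₂ + k/n₁)/2}` (for `k, l ≥ 1`, `n₂k < n₁l`,
`n₂k + n₁l < 2n₁n₂`) together with the type II pairs
`{(k/n₁ − l/n₂)/2, (k/n₁ + l/n₂)/2}` (for `k, l ≥ 1`, `n₁l < n₂k`, `n₂k + n₁l < 2n₁n₂`);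
moreover distinct index pairs `(k, l)` give distinct unordered pairs. -/
theorem lissajous_stmt5 (n₁ n₂ : ℕ) (h₁ : 2 ≤ n₁) (h₂ : 2 ≤ n₂) (hcop : Nat.Coprime n₁ n₂) :
    ∃ φ₀ > (0:ℝ), ∀ φ : ℝ, Irrational φ → 0 < φ → φ < φ₀ →
      let L : ℝ → ℝ × ℝ := fun t =>
        (Real.cos (2 * π * n₁ * t), Real.cos (2 * π * n₂ * (t + φ)))
      let S : Set (Sym2 ℝ) := {z | ∃ s t : ℝ, z = Sym2.mk s t ∧
        s ∈ Set.Ico (0:ℝ) 1 ∧ t ∈ Set.Ico (0:ℝ) 1 ∧ s ≠ t ∧ L s = L t}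
      let A : Set (ℤ × ℤ) := {p | 1 ≤ p.1 ∧ 1 ≤ p.2 ∧ (n₂ : ℤ) * p.1 < (n₁ : ℤ) * p.2 ∧
        (n₂ : ℤ) * p.1 + (n₁ : ℤ) * p.2 < 2 * n₁ * n₂}
      let B : Set (ℤ × ℤ) := {p | 1 ≤ p.1 ∧ 1 ≤ p.2 ∧ (n₁ : ℤ) * p.2 < (n₂ : ℤ) * p.1 ∧
        (n₂ : ℤ) * p.1 + (n₁ : ℤ) * p.2 < 2 * n₁ * n₂}
      let fI : ℤ × ℤ → Sym2 ℝ := fun p =>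
        Sym2.mk (-φ + ((p.2 : ℝ) / n₂ - (p.1 : ℝ) / n₁) / 2)
                 (-φ + ((p.2 : ℝ) / n₂ + (p.1 : ℝ) / n₁) / 2)
      let fII : ℤ × ℤ → Sym2 ℝ := fun p =>
        Sym2.mk (((p.1 : ℝ) / n₁ - (p.2 : ℝ) / n₂) / 2)
                 (((p.1 : ℝ) / n₁ + (p.2 : ℝ) / n₂) / 2)
      S = fI '' A ∪ fII '' B ∧ Set.InjOn fI A ∧ Set.InjOn fII B ∧
        ∀ p ∈ A, ∀ q ∈ B, fI p ≠ fII q := by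
  have hn₁ : 0 < n₁ := by omega
  have hn₂ : 0 < n₂ := by omega
  refine ⟨1 / (2 * n₁ * n₂), by positivity, fun φ hφirr hφ₀ hφ => ?_⟩
  exact ⟨doublePoints_eq hcop hn₁ hn₂ hφirr hφ₀ hφ, injOn_typeIPair hn₁ hn₂,
    injOn_typeIIPair hn₁ hn₂, fun p _ q _ => typeIPair_ne_typeIIPair hφirr p q⟩
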